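/- arXiv:1304.6854 — 2 statements merged into one kernel-verified Lean document; each statement's English description precedes it below -/
import Mathlib

section
/- Let C be a right rigid, left cancellative category equipped with a length functor. Then for every arrow a, the set [aC, d(a)C] of principal right ideals xC with aC ⊆ xC ⊆ d(a)C is finite; hence C is a left Rees category. -/
open CategoryTheory

universe v u

variable {C : Type u} [Category.{v} C]

/-- The set of all arrows of a category, as a sigma type. -/
abbrev CatArr (C : Type u) [Category.{v} C] : Type (max u v) := Σ (X : C) (Y : C), X ⟶ Y

/-- An arrow is an atom if it is not invertible and in any factorization one factor
is invertible. -/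
def IsAtomArrow {X Y : C} (a : X ⟶ Y) : Prop :=
  ¬ IsIso a ∧ ∀ ⦃Z : C⦄ (b : X ⟶ Z) (c : Z ⟶ Y), a = b ≫ c → IsIso b ∨ IsIso c

/-- The principal right ideal `aC` generated by an arrow `a`. -/
def rIdeal {X Y : C} (a : X ⟶ Y) : Set (CatArr C) :=
  { p | ∃ (Z : C) (b : Y ⟶ Z), p = ⟨X, Z, a ≫ b⟩ }

/-- The principal left ideal `Ca` generated by an arrow `a`. -/
def lIdeal {X Y : C} (a : X ⟶ Y) : Set (CatArr C) :=
  { p | ∃ (Z : C) (b : Z ⟶ X), p = ⟨Z, Y, b ≫ a⟩ }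

/-- The principal two-sided ideal `CaC` generated by an arrow `a`. -/
def twoIdeal {X Y : C} (a : X ⟶ Y) : Set (CatArr C) :=
  { p | ∃ (W Z : C) (b : W ⟶ X) (c : Y ⟶ Z), p = ⟨W, Z, b ≫ a ≫ c⟩ }

/-- A category is left cancellative if `ax = ay` implies `x = y`. -/
def LeftCancellativeCat (C : Type u) [Category.{v} C] : Prop :=
  ∀ ⦃X Y Z : C⦄ (a : X ⟶ Y) (x y : Y ⟶ Z), a ≫ x = a ≫ y → x = y

/-- A category is right cancellative if `xa = ya` implies `x = y`. -/
def RightCancellativeCat (C : Type u) [Category.{v} C] : Prop :=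
  ∀ ⦃X Y Z : C⦄ (x y : X ⟶ Y) (a : Y ⟶ Z), x ≫ a = y ≫ a → x = y

/-- A category is right rigid if principal right ideals that intersect are comparable. -/
def RightRigid (C : Type u) [Category.{v} C] : Prop :=
  ∀ ⦃X Y X' Y' : C⦄ (a : X ⟶ Y) (b : X' ⟶ Y'),
    (rIdeal a ∩ rIdeal b).Nonempty → rIdeal a ⊆ rIdeal b ∨ rIdeal b ⊆ rIdeal a

/-- A category is equidivisible if every equality `ab = cd` admits an intermediate arrow. -/
def Equidivisible (C : Type u) [Category.{v} C] : Prop :=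
  ∀ ⦃W X Y Z : C⦄ (a : W ⟶ X) (b : X ⟶ Z) (c : W ⟶ Y) (d : Y ⟶ Z),
    a ≫ b = c ≫ d →
      (∃ u : Y ⟶ X, a = c ≫ u ∧ d = u ≫ b) ∨ (∃ v : X ⟶ Y, c = a ≫ v ∧ b = v ≫ d)

/-- A length functor on a category: additive on composition, zero exactly on invertible
arrows, one exactly on atoms. -/
structure LengthFunctor (C : Type u) [Category.{v} C] where
  len : ∀ ⦃X Y : C⦄, (X ⟶ Y) → ℕ
  len_comp : ∀ ⦃X Y Z : C⦄ (f : X ⟶ Y) (g : Y ⟶ Z), len (f ≫ g) = len f + len g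
  len_eq_zero_iff : ∀ ⦃X Y : C⦄ (f : X ⟶ Y), len f = 0 ↔ IsIso f
  len_eq_one_iff : ∀ ⦃X Y : C⦄ (f : X ⟶ Y), len f = 1 ↔ IsAtomArrow f

/-- A subset of the arrows is a principal right ideal if it has the form `xC`. -/
def IsPrincipalRightIdeal (S : Set (CatArr C)) : Prop :=
  ∃ (U V : C) (x : U ⟶ V), S = rIdeal x

/-- The interval `[aC, bC]` of principal right ideals between `aC` and `bC`. -/
def rInterval {X Y Z W : C} (a : X ⟶ Y) (b : Z ⟶ W) : Set (Set (CatArr C)) :=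
  { S | IsPrincipalRightIdeal S ∧ rIdeal a ⊆ S ∧ S ⊆ rIdeal b }

/-- A left Rees category: left cancellative, right rigid, and each principal right
ideal is properly contained in only finitely many principal right ideals. -/
def IsLeftReesCategory (C : Type u) [Category.{v} C] : Prop :=
  LeftCancellativeCat C ∧ RightRigid C ∧
    ∀ ⦃X Y : C⦄ (a : X ⟶ Y),
      { S : Set (CatArr C) | IsPrincipalRightIdeal S ∧ rIdeal a ⊂ S }.Finite

/-- A category is skeletal if every invertible arrow has equal domain and codomain. -/
def SkeletalCat (C : Type u) [Category.{v} C] : Prop :=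
  ∀ ⦃X Y : C⦄ (g : X ⟶ Y), IsIso g → X = Y

lemma arr_mem_rIdeal_self {X Y : C} (a : X ⟶ Y) : (⟨X, Y, a⟩ : CatArr C) ∈ rIdeal a :=
  ⟨Y, 𝟙 Y, by simp [rIdeal]⟩

lemma factor_of_mem_rIdeal {U V X Y : C} (x : U ⟶ V) (f : X ⟶ Y)
    (h : (⟨X, Y, f⟩ : CatArr C) ∈ rIdeal x) :
    ∃ (hU : X = U) (b : V ⟶ Y), f = eqToHom hU ≫ x ≫ b := by
  obtain ⟨Z, b, heq⟩ := h
  rw [Sigma.ext_iff] at heq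
  obtain ⟨rfl, heq⟩ := heq
  rw [heq_eq_eq, Sigma.ext_iff] at heq
  obtain ⟨rfl, heq⟩ := heq
  rw [heq_eq_eq] at heq
  exact ⟨rfl, b, by simpa using heq⟩

lemma rIdeal_subset_of_factor {U V W : C} (x : U ⟶ V) (y : U ⟶ W) (c : W ⟶ V)
    (h : x = y ≫ c) : rIdeal x ⊆ rIdeal y := by
  rintro p ⟨Z, b, rfl⟩
  exact ⟨Z, c ≫ b, by simp [h]⟩

lemma len_le_of_rIdeal_subset (L : LengthFunctor C) {U V U' V' : C} (x : U ⟶ V)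
    (y : U' ⟶ V') (h : rIdeal x ⊆ rIdeal y) : L.len y ≤ L.len x := by
  obtain ⟨rfl, c, rfl⟩ := factor_of_mem_rIdeal y x (h (arr_mem_rIdeal_self x))
  simp only [eqToHom_refl, Category.id_comp, L.len_comp]
  omega

lemma rIdeal_eq_of_subset_of_len_le (L : LengthFunctor C) {U V U' V' : C} (x : U ⟶ V)
    (y : U' ⟶ V') (h : rIdeal x ⊆ rIdeal y) (hl : L.len x ≤ L.len y) :
    rIdeal x = rIdeal y := by
  obtain ⟨rfl, c, rfl⟩ := factor_of_mem_rIdeal y x (h (arr_mem_rIdeal_self x))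
  simp only [eqToHom_refl, Category.id_comp] at h hl ⊢
  simp only [L.len_comp] at hl
  have hc : L.len c = 0 := by omega
  have : IsIso c := (L.len_eq_zero_iff c).mp hc
  exact le_antisymm h (rIdeal_subset_of_factor y (y ≫ c) (inv c) (by simp))

lemma len_eq_of_rIdeal_eq (L : LengthFunctor C) {U V U' V' : C} (x : U ⟶ V)
    (y : U' ⟶ V') (h : rIdeal x = rIdeal y) : L.len x = L.len y :=
  le_antisymm (len_le_of_rIdeal_subset L y x h.ge) (len_le_of_rIdeal_subset L x y h.le)

/-- A right rigid, left cancellative category with a length functor has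
all intervals `[aC, d(a)C]` finite, and hence is a left Rees category. -/
theorem interval_finite_of_lengthFunctor (hLC : LeftCancellativeCat C)
    (hRR : RightRigid C) (L : LengthFunctor C) :
    (∀ ⦃X Y : C⦄ (a : X ⟶ Y), (rInterval a (𝟙 X)).Finite) ∧ IsLeftReesCategory C := by
  have key : ∀ ⦃X Y : C⦄ (a : X ⟶ Y), (rInterval a (𝟙 X)).Finite := by
    intro X Y a
    set f : Set (CatArr C) → ℕ :=
      fun S => sInf {n | ∃ (U V : C) (x : U ⟶ V), S = rIdeal x ∧ L.len x = n} with hf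
    have hgen : ∀ {U V : C} (x : U ⟶ V), f (rIdeal x) = L.len x := by
      intro U V x
      have hset : {n | ∃ (U' V' : C) (y : U' ⟶ V'), rIdeal x = rIdeal y ∧ L.len y = n}
          = {L.len x} := by
        ext n
        constructor
        · rintro ⟨U', V', y, he, rfl⟩
          exact (len_eq_of_rIdeal_eq L x y he).symm
        · rintro rfl
          exact ⟨U, V, x, rfl, rfl⟩
      rw [hf]
      simp [hset]
    apply Set.Finite.of_finite_image (f := f)
    · apply (Set.finite_Iic (L.len a)).subset
      rintro n ⟨S, hS, rfl⟩
      obtain ⟨⟨U, V, x, rfl⟩, hsub, _⟩ := hS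
      rw [hgen]
      exact len_le_of_rIdeal_subset L a x hsub
    · rintro S hS T hT hfe
      obtain ⟨⟨U, V, x, rfl⟩, hxa, _⟩ := hS
      obtain ⟨⟨U', V', y, rfl⟩, hya, _⟩ := hT
      rw [hgen, hgen] at hfe
      have hne : (rIdeal x ∩ rIdeal y).Nonempty :=
        ⟨⟨X, Y, a⟩, hxa (arr_mem_rIdeal_self a), hya (arr_mem_rIdeal_self a)⟩
      rcases hRR x y hne with h | h
      · exact rIdeal_eq_of_subset_of_len_le L x y h hfe.le
      · exact (rIdeal_eq_of_subset_of_len_le L y x h hfe.ge).symm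
  refine ⟨key, hLC, hRR, ?_⟩
  intro X Y a
  apply (key a).subset
  rintro S ⟨⟨U, V, x, rfl⟩, hsub⟩
  refine ⟨⟨U, V, x, rfl⟩, hsub.1, ?_⟩
  obtain ⟨rfl, b, -⟩ := factor_of_mem_rIdeal x a (hsub.1 (arr_mem_rIdeal_self a))
  rintro p ⟨Z, b', rfl⟩
  exact ⟨Z, x ≫ b', by simp⟩
end

section
/- Let C be an equidivisible category equipped with a length functor in which every invertible arrow is an identity. Then C is left cancellative (and hence a left Rees category). -/
open CategoryTheory

universe v u

variable {C : Type u} [Category.{v} C]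

/-- Extract componentwise equalities from equality of sigma-type arrows. -/
lemma catArr_eq_elim {X Y X' Y' : C} {f : X ⟶ Y} {g : X' ⟶ Y'}
    (h : (⟨X, ⟨Y, f⟩⟩ : CatArr C) = ⟨X', ⟨Y', g⟩⟩) :
    ∃ (h1 : X = X') (h2 : Y = Y'), HEq f g := by
  injection h with h1 h2
  subst h1
  rw [heq_eq_eq] at h2
  injection h2 with h3 h4
  subst h3
  exact ⟨rfl, rfl, h4⟩

lemma self_mem_rIdeal {X Y : C} (a : X ⟶ Y) : (⟨X, ⟨Y, a⟩⟩ : CatArr C) ∈ rIdeal a :=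
  ⟨Y, 𝟙 Y, by simp [rIdeal]⟩

lemma rIdeal_comp_subset {X Y Z : C} (b : X ⟶ Y) (u : Y ⟶ Z) :
    rIdeal (b ≫ u) ⊆ rIdeal b := by
  rintro p ⟨W, d, rfl⟩
  exact ⟨W, u ≫ d, by simp [rIdeal]⟩

lemma len_le_of_mem_rIdeal (L : LengthFunctor C) {X Y U V : C} (a : X ⟶ Y) (x : U ⟶ V)
    (h : (⟨X, ⟨Y, a⟩⟩ : CatArr C) ∈ rIdeal x) : L.len x ≤ L.len a := by
  obtain ⟨Z, c, hp⟩ := h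
  obtain ⟨h1, h2, h3⟩ := catArr_eq_elim hp
  subst h1; subst h2
  rw [heq_eq_eq] at h3
  rw [h3, L.len_comp]
  omega

lemma rIdeal_eq_of_subset_of_len_eq (L : LengthFunctor C)
    (htr : ∀ ⦃X Y : C⦄ (g : X ⟶ Y), IsIso g → ∃ h : X = Y, g = eqToHom h)
    {U V U' V' : C} (x : U ⟶ V) (y : U' ⟶ V')
    (hsub : rIdeal x ⊆ rIdeal y) (hlen : L.len x = L.len y) :
    rIdeal x = rIdeal y := by
  obtain ⟨Z, c, hp⟩ := hsub (self_mem_rIdeal x)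
  obtain ⟨h1, h2, h3⟩ := catArr_eq_elim hp
  subst h1; subst h2
  rw [heq_eq_eq] at h3
  have hc0 : L.len c = 0 := by
    have := L.len_comp y c
    rw [← h3] at this
    omega
  have hiso : IsIso c := (L.len_eq_zero_iff c).mp hc0
  obtain ⟨he, hce⟩ := htr c hiso
  subst he
  simp only [eqToHom_refl] at hce
  subst hce
  rw [Category.comp_id] at h3
  rw [h3]

/-- An equidivisible category with a length functor in which every
invertible arrow is an identity is left cancellative (and hence a left Rees
category). -/
theorem leftCancellative_of_trivial_isos (L : LengthFunctor C) (hE : Equidivisible C)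
    (htr : ∀ ⦃X Y : C⦄ (g : X ⟶ Y), IsIso g → ∃ h : X = Y, g = eqToHom h) :
    LeftCancellativeCat C ∧ IsLeftReesCategory C := by
  classical
  -- a helper: an arrow of length zero is an identity
  have hid : ∀ ⦃X : C⦄ (g : X ⟶ X), L.len g = 0 → g = 𝟙 X := by
    intro X g hg
    obtain ⟨h, hge⟩ := htr g ((L.len_eq_zero_iff g).mp hg)
    rw [hge]; simp
  have LC : LeftCancellativeCat C := by
    intro X Y Z a x y h
    rcases hE a x a y h with ⟨u, hu1, hu2⟩ | ⟨v, hv1, hv2⟩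
    · have hu0 : L.len u = 0 := by
        have := L.len_comp a u
        rw [← hu1] at this
        omega
      rw [hid u hu0, Category.id_comp] at hu2
      exact hu2.symm
    · have hv0 : L.len v = 0 := by
        have := L.len_comp a v
        rw [← hv1] at this
        omega
      rw [hid v hv0, Category.id_comp] at hv2
      exact hv2
  have RR : RightRigid C := by
    intro X Y X' Y' a b ⟨p, ⟨Z, c, hc⟩, ⟨Z', c', hc'⟩⟩
    rw [hc] at hc'
    obtain ⟨h1, h2, h3⟩ := catArr_eq_elim hc'
    subst h1; subst h2
    rw [heq_eq_eq] at h3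
    rcases hE a c b c' h3 with ⟨u, hu1, hu2⟩ | ⟨v, hv1, hv2⟩
    · left
      rw [hu1]
      exact rIdeal_comp_subset b u
    · right
      rw [hv1]
      exact rIdeal_comp_subset a v
  refine ⟨LC, LC, RR, ?_⟩
  intro X Y a
  set T := { S : Set (CatArr C) | IsPrincipalRightIdeal S ∧ rIdeal a ⊂ S } with hT
  have hmemT : ∀ S ∈ T, (⟨X, ⟨Y, a⟩⟩ : CatArr C) ∈ S := fun S hS =>
    hS.2.1 (self_mem_rIdeal a)
  have : Finite T := by
    have F : ∀ S : T, ∃ (U V : C) (x : U ⟶ V), S.1 = rIdeal x := fun S => S.2.1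
    choose U V x hx using F
    have hbound : ∀ S : T, L.len (x S) < L.len a + 1 := by
      intro S
      have hmem : (⟨X, ⟨Y, a⟩⟩ : CatArr C) ∈ rIdeal (x S) := by
        rw [← hx S]; exact hmemT S.1 S.2
      have := len_le_of_mem_rIdeal L a (x S) hmem
      omega
    apply Finite.of_injective (fun S : T => (⟨L.len (x S), hbound S⟩ : Fin (L.len a + 1)))
    intro S S' hEq
    simp only [Fin.mk.injEq] at hEq
    have hS : (⟨X, ⟨Y, a⟩⟩ : CatArr C) ∈ rIdeal (x S) := by
      rw [← hx S]; exact hmemT S.1 S.2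
    have hS' : (⟨X, ⟨Y, a⟩⟩ : CatArr C) ∈ rIdeal (x S') := by
      rw [← hx S']; exact hmemT S'.1 S'.2
    have hcmp := RR (x S) (x S') ⟨⟨X, ⟨Y, a⟩⟩, hS, hS'⟩
    have heqI : rIdeal (x S) = rIdeal (x S') := by
      rcases hcmp with hsub | hsub
      · exact rIdeal_eq_of_subset_of_len_eq L htr (x S) (x S') hsub hEq
      · exact (rIdeal_eq_of_subset_of_len_eq L htr (x S') (x S) hsub hEq.symm).symm
    apply Subtype.ext
    rw [hx S, hx S', heqI]
  exact Set.toFinite T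
end
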